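/- Let K = (G, M, I) be a formal context, m ∈ M, R = G \ m', g ∈ R, L = op^{g,m}(K) with derivation (·)^J, and let S be an R-mixed generator of K. Then: (a) if S is an R-mixed generator of L with R ⊆ S, S^J ≠ S' and (S ∪ {g})^J ≠ S' (case S ∈ C^R), then S = S'' = S^{JJ}; (b) if S is an R-mixed generator of L with S^J = S' (case S ∈ A), then S ⊆ S'' ⊆ S^{JJ}; (c) if S is not an R-mixed generator of L (case S ∈ N), or is an R-mixed generator of L with S^J ≠ S' and (S ∪ {g})^J = S' (case S ∈ B), then S ⊆ S'' \ {g} ⊆ S^{JJ}. Furthermore, in all of the cases (a), (b), (c) it holds that S^{JJ} \ S'' ⊆ χ̄(S) and S'' \ S ⊆ χ̄(S). -/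
import Mathlib


/-- Derivation of a set of objects: the attributes shared by all of them. -/
def intentOf {G M : Type*} (I : G → M → Prop) (S : Set G) : Set M :=
  {n | ∀ g ∈ S, I g n}

/-- Derivation of a set of attributes: the objects having all of them. -/
def extentOf {G M : Type*} (I : G → M → Prop) (B : Set M) : Set G :=
  {g | ∀ n ∈ B, I g n}

/-- Double derivation (closure) of a set of objects. -/
def cl {G M : Type*} (I : G → M → Prop) (S : Set G) : Set G :=
  extentOf I (intentOf I S)

/-- A set of objects is an extent if it is closed under double derivation. -/
def IsExtent {G M : Type*} (I : G → M → Prop) (S : Set G) : Prop :=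
  cl I S = S

/-- The number of concepts of the context equals its number of extents. -/
noncomputable def numConcepts {G M : Type*} (I : G → M → Prop) : ℕ :=
  {S : Set G | IsExtent I S}.ncard

/-- The context op^{g,m}(K): fill the row of `g` except at `m`,
and fill the column of `m` except at `g`. -/
def opRel {G M : Type*} (I : G → M → Prop) (g : G) (m : M) : G → M → Prop :=
  fun h n => I h n ∨ (h = g ∧ n ≠ m) ∨ (h ≠ g ∧ n = m)

/-- `S` is an `R`-mixed generator. -/
def MixGen {G M : Type*} (I : G → M → Prop) (R S : Set G) : Prop :=
  ∀ g : G, (g ∈ S ∩ R → cl I (S \ {g}) ≠ cl I S) ∧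
    (g ∉ S ∪ R → cl I (S ∪ {g}) ≠ cl I S)

/-- `S` strongly avoids `h` (with respect to the attribute `m`):
`S' ∩ (hᶜ \ {m}) ≠ ∅`. -/
def StronglyAvoids {G M : Type*} (I : G → M → Prop) (m : M) (S : Set G) (h : G) : Prop :=
  ∃ n, n ∈ intentOf I S ∧ ¬ I h n ∧ n ≠ m

/-- `χ(S)`: the set of objects of `R = G \ m'` strongly avoided by `S`. -/
def chi {G M : Type*} (I : G → M → Prop) (m : M) (S : Set G) : Set G :=
  {h | ¬ I h m ∧ StronglyAvoids I m S h}

section Aux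
variable {G M : Type*}

lemma subset_cl (I : G → M → Prop) (S : Set G) : S ⊆ cl I S :=
  fun h hh n hn => hn h hh

lemma intent_antitone (I : G → M → Prop) {A B : Set G} (h : A ⊆ B) :
    intentOf I B ⊆ intentOf I A := fun n hn a ha => hn a (h ha)

lemma intent_cl (I : G → M → Prop) (S : Set G) : intentOf I (cl I S) = intentOf I S := by
  apply Set.Subset.antisymm (intent_antitone I (subset_cl I S))
  intro n hn h hh
  exact hh n hn

lemma cl_eq_iff (I : G → M → Prop) {A B : Set G} :
    cl I A = cl I B ↔ intentOf I A = intentOf I B := by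
  constructor
  · intro h
    rw [← intent_cl I A, ← intent_cl I B, h]
  · intro h
    unfold cl
    rw [h]

/-- From MixGen inequality to a witness. -/
lemma exists_witness_diff (I : G → M → Prop) {S : Set G} {h : G}
    (hne : cl I (S \ {h}) ≠ cl I S) :
    ∃ n, n ∈ intentOf I (S \ {h}) ∧ n ∉ intentOf I S := by
  have : intentOf I (S \ {h}) ≠ intentOf I S := fun e => hne ((cl_eq_iff I).2 e)
  have hsub : intentOf I S ⊆ intentOf I (S \ {h}) :=
    intent_antitone I Set.diff_subset
  rcases Set.not_subset.1 (fun hs => this (Set.Subset.antisymm hs hsub)) with ⟨n, h1, h2⟩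
  exact ⟨n, h1, h2⟩

lemma exists_witness_union (I : G → M → Prop) {S : Set G} {h : G}
    (hne : cl I (S ∪ {h}) ≠ cl I S) :
    ∃ n, n ∈ intentOf I S ∧ ¬ I h n := by
  have hne' : intentOf I (S ∪ {h}) ≠ intentOf I S := fun e => hne ((cl_eq_iff I).2 e)
  by_contra hc
  push_neg at hc
  apply hne'
  ext n
  constructor
  · intro hn k hk
    exact hn k (Or.inl hk)
  · intro hn k hk
    rcases hk with hk | hk
    · exact hn k hk
    · rcases hk with rfl
      exact hc n hn

variable {I : G → M → Prop} {m : M} {g : G}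

lemma intentJ_of_mem (hg : ¬ I g m) {S : Set G} (hgS : g ∈ S) :
    intentOf (opRel I g m) S = intentOf I (S \ {g}) \ {m} := by
  ext n
  simp only [intentOf, opRel, Set.mem_setOf_eq, Set.mem_diff, Set.mem_singleton_iff]
  constructor
  · intro h
    have hnm : n ≠ m := by
      rintro rfl
      rcases h g hgS with h1 | ⟨_, h2⟩ | ⟨h3, _⟩
      · exact hg h1
      · exact h2 rfl
      · exact h3 rfl
    refine ⟨fun k hk => ?_, hnm⟩
    rcases h k hk.1 with h1 | ⟨rfl, _⟩ | ⟨_, rfl⟩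
    · exact h1
    · exact absurd rfl hk.2
    · exact absurd rfl hnm
  · rintro ⟨h1, hnm⟩ k hk
    by_cases hkg : k = g
    · exact Or.inr (Or.inl ⟨hkg, hnm⟩)
    · exact Or.inl (h1 k ⟨hk, hkg⟩)

lemma intentJ_of_not_mem (hg : ¬ I g m) {S : Set G} (hgS : g ∉ S) :
    intentOf (opRel I g m) S = intentOf I S ∪ {m} := by
  ext n
  simp only [intentOf, opRel, Set.mem_setOf_eq, Set.mem_union, Set.mem_singleton_iff]
  constructor
  · intro h
    by_cases hnm : n = m
    · exact Or.inr hnm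
    · refine Or.inl (fun k hk => ?_)
      rcases h k hk with h1 | ⟨rfl, _⟩ | ⟨_, rfl⟩
      · exact h1
      · exact absurd hk hgS
      · exact absurd rfl hnm
  · intro h k hk
    rcases h with h | rfl
    · exact Or.inl (h k hk)
    · exact Or.inr (Or.inr ⟨fun e => hgS (e ▸ hk), rfl⟩)

/-- Membership of g in a J-extent. -/
lemma g_mem_extentJ (hg : ¬ I g m) {B : Set M} : g ∈ extentOf (opRel I g m) B ↔ m ∉ B := by
  simp only [extentOf, opRel, Set.mem_setOf_eq]
  constructor
  · intro h hm
    rcases h m hm with h1 | ⟨_, h2⟩ | ⟨h3, _⟩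
    · exact hg h1
    · exact h2 rfl
    · exact h3 rfl
  · intro hm n hn
    exact Or.inr (Or.inl ⟨by trivial, fun e => hm (e ▸ hn)⟩)

lemma ne_mem_extentJ {h : G} (hne : h ≠ g) {B : Set M} :
    h ∈ extentOf (opRel I g m) B ↔ ∀ n ∈ B, n = m ∨ I h n := by
  simp only [extentOf, opRel, Set.mem_setOf_eq]
  constructor
  · intro hh n hn
    rcases hh n hn with h1 | ⟨h2, _⟩ | ⟨_, h3⟩
    · exact Or.inr h1
    · exact absurd h2 hne
    · exact Or.inl h3
  · intro hh n hn
    rcases hh n hn with rfl | h1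
    · exact Or.inr (Or.inr ⟨hne, rfl⟩)
    · exact Or.inl h1

/-- Key lemma: if g ∈ S and S is an R-mixed generator of K, it is one of L. -/
lemma mixgen_J_of_mem (hg : ¬ I g m) {S : Set G}
    (hK : MixGen I {h : G | ¬ I h m} S) (hgS : g ∈ S) :
    MixGen (opRel I g m) {h : G | ¬ I h m} S := by
  intro h
  constructor
  · rintro ⟨hhS, hhR⟩ heq
    rw [cl_eq_iff] at heq
    by_cases hhg : h = g
    · rw [hhg] at heq
      have hgd : g ∉ S \ {g} := fun hx => hx.2 rfl
      rw [intentJ_of_mem hg hgS, intentJ_of_not_mem hg hgd] at heq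
      have : m ∈ intentOf I (S \ {g}) \ {m} := by
        rw [← heq]; exact Or.inr rfl
      exact this.2 rfl
    · -- h ≠ g, so g ∈ S \ {h}
      have hgdh : g ∈ S \ {h} := ⟨hgS, fun e => hhg e.symm⟩
      rw [intentJ_of_mem hg hgS, intentJ_of_mem hg hgdh] at heq
      rcases exists_witness_diff I ((hK h).1 ⟨hhS, hhR⟩) with ⟨n, hn1, hn2⟩
      have hnm : n ≠ m := by
        rintro rfl
        exact hg (hn1 g hgdh)
      have hng : n ∉ intentOf I (S \ {g}) := by
        intro hn3
        apply hn2
        intro k hk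
        by_cases hkg : k = g
        · have hkh : k ∈ S \ {h} := ⟨hk, fun e => by rw [hkg] at e; exact hhg e.symm⟩
          exact hn1 k hkh
        · have hkg' : k ∈ S \ {g} := ⟨hk, hkg⟩
          exact hn3 k hkg'
      have : n ∈ intentOf I (S \ {g}) \ {m} := by
        rw [← heq]
        exact ⟨intent_antitone I Set.diff_subset hn1, hnm⟩
      exact hng this.1
  · rintro hh heq
    simp only [Set.mem_union, Set.mem_setOf_eq, not_or, not_not] at hh
    obtain ⟨hhS, hhm⟩ := hh
    have hhg : h ≠ g := fun e => hg (e ▸ hhm)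
    rw [cl_eq_iff] at heq
    rw [intentJ_of_mem hg (Or.inl hgS), intentJ_of_mem hg hgS] at heq
    rcases exists_witness_union I ((hK h).2 (by simp [hhS, hhm])) with ⟨n, hn1, hn2⟩
    have hnm : n ≠ m := fun e => hn2 (e ▸ hhm)
    have : n ∈ intentOf I ((S ∪ {h}) \ {g}) \ {m} := by
      rw [heq]
      exact ⟨intent_antitone I Set.diff_subset hn1, hnm⟩
    have hmem : h ∈ (S ∪ {h}) \ {g} := ⟨Or.inr rfl, hhg⟩
    exact hn2 (this.1 h hmem)

end Aux

section Main
variable {G M : Type*} {I : G → M → Prop} {m : M} {g : G}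

lemma fact1 (hg : ¬ I g m) {S : Set G} (hK : MixGen I {h : G | ¬ I h m} S)
    {h : G} (hcl : h ∈ cl I S) (hnS : h ∉ S) :
    ¬ I h m ∧ ∀ n, n ∈ intentOf I S → n ≠ m → I h n := by
  have hcl' : ∀ n ∈ intentOf I S, I h n := hcl
  constructor
  · intro hIm
    apply (hK h).2 (fun hx => hx.elim hnS (fun hr => hr hIm))
    apply (cl_eq_iff I).2
    ext n
    constructor
    · intro hn k hk
      exact hn k (Or.inl hk)
    · intro hn k hk
      rcases hk with hk | hk
      · exact hn k hk
      · rcases hk with rfl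
        exact hcl' n hn
  · intro n hn _
    exact hcl' n hn

lemma fact2 (hg : ¬ I g m) {S : Set G}
    {h : G} (hclJ : h ∈ cl (opRel I g m) S) (hncl : h ∉ cl I S) :
    ¬ I h m ∧ ∀ n, n ∈ intentOf I S → n ≠ m → I h n := by
  obtain ⟨n, hn1, hn2⟩ : ∃ n, n ∈ intentOf I S ∧ ¬ I h n := by
    by_contra hc
    push_neg at hc
    exact hncl (fun n hn => hc n hn)
  by_cases hhg : h = g
  · exfalso
    subst hhg
    have hgS : h ∈ S := by
      by_contra hgs
      have hmem : m ∉ intentOf (opRel I h m) S := (g_mem_extentJ hg).1 hclJ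
      rw [intentJ_of_not_mem hg hgs] at hmem
      exact hmem (Or.inr rfl)
    exact hncl (subset_cl I S hgS)
  · have hmem : ∀ n' ∈ intentOf (opRel I g m) S, n' = m ∨ I h n' :=
      (ne_mem_extentJ hhg).1 hclJ
    have key : ∀ n', n' ∈ intentOf I S → n' ≠ m → I h n' := by
      intro n' hn' hn'm
      have hJ : n' ∈ intentOf (opRel I g m) S := by
        by_cases hgs : g ∈ S
        · rw [intentJ_of_mem hg hgs]
          exact ⟨intent_antitone I Set.diff_subset hn', hn'm⟩
        · rw [intentJ_of_not_mem hg hgs]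
          exact Or.inl hn'
      rcases hmem n' hJ with rfl | h1
      · exact absurd rfl hn'm
      · exact h1
    have hnm : n = m := by
      by_contra h'
      exact hn2 (key n hn1 h')
    subst hnm
    exact ⟨hn2, key⟩

lemma partbc (hg : ¬ I g m) {S : Set G} (hgnS : g ∉ S) :
    cl I S \ {g} ⊆ cl (opRel I g m) S := by
  rintro h ⟨hcl, hhg⟩
  have hcl' : ∀ n ∈ intentOf I S, I h n := hcl
  show ∀ n ∈ intentOf (opRel I g m) S, opRel I g m h n
  rw [intentJ_of_not_mem hg hgnS]
  rintro n (hn | rfl)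
  · exact Or.inl (hcl' n hn)
  · exact Or.inr (Or.inr ⟨hhg, rfl⟩)

end Main

theorem statement13 {G M : Type*} (I : G → M → Prop) (m : M) (g : G)
    (hg : ¬ I g m) (S : Set G)
    (hK : MixGen I {h : G | ¬ I h m} S) :
    -- (a) case S ∈ C^R
    ((MixGen (opRel I g m) {h : G | ¬ I h m} S ∧ {h : G | ¬ I h m} ⊆ S ∧
        intentOf (opRel I g m) S ≠ intentOf I S ∧
        intentOf (opRel I g m) (S ∪ {g}) ≠ intentOf I S) →
      S = cl I S ∧ cl I S = cl (opRel I g m) S) ∧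
    -- (b) case S ∈ A
    ((MixGen (opRel I g m) {h : G | ¬ I h m} S ∧
        intentOf (opRel I g m) S = intentOf I S) →
      S ⊆ cl I S ∧ cl I S ⊆ cl (opRel I g m) S) ∧
    -- (c) case S ∈ N or S ∈ B
    ((¬ MixGen (opRel I g m) {h : G | ¬ I h m} S ∨
        (MixGen (opRel I g m) {h : G | ¬ I h m} S ∧
          intentOf (opRel I g m) S ≠ intentOf I S ∧
          intentOf (opRel I g m) (S ∪ {g}) = intentOf I S)) →
      S ⊆ cl I S \ {g} ∧ cl I S \ {g} ⊆ cl (opRel I g m) S) ∧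
    -- in all of the cases (a), (b), (c)
    (((MixGen (opRel I g m) {h : G | ¬ I h m} S ∧ {h : G | ¬ I h m} ⊆ S ∧
        intentOf (opRel I g m) S ≠ intentOf I S ∧
        intentOf (opRel I g m) (S ∪ {g}) ≠ intentOf I S) ∨
      (MixGen (opRel I g m) {h : G | ¬ I h m} S ∧
        intentOf (opRel I g m) S = intentOf I S) ∨
      ¬ MixGen (opRel I g m) {h : G | ¬ I h m} S ∨
      (MixGen (opRel I g m) {h : G | ¬ I h m} S ∧
        intentOf (opRel I g m) S ≠ intentOf I S ∧
        intentOf (opRel I g m) (S ∪ {g}) = intentOf I S)) →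
      cl (opRel I g m) S \ cl I S ⊆ {h : G | ¬ I h m} \ chi I m S ∧
      cl I S \ S ⊆ {h : G | ¬ I h m} \ chi I m S) := by
  have fR : ∀ h : G, h ∈ cl I S \ S → h ∈ {h : G | ¬ I h m} \ chi I m S := by
    rintro h ⟨h1, h2⟩
    obtain ⟨a, b⟩ := fact1 hg hK h1 h2
    refine ⟨a, fun hc => ?_⟩
    simp only [chi, Set.mem_setOf_eq, StronglyAvoids] at hc
    obtain ⟨-, n, x1, x2, x3⟩ := hc
    exact x2 (b n x1 x3)
  have fJ : ∀ h : G, h ∈ cl (opRel I g m) S \ cl I S → h ∈ {h : G | ¬ I h m} \ chi I m S := by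
    rintro h ⟨h1, h2⟩
    obtain ⟨a, b⟩ := fact2 hg h1 h2
    refine ⟨a, fun hc => ?_⟩
    simp only [chi, Set.mem_setOf_eq, StronglyAvoids] at hc
    obtain ⟨-, n, x1, x2, x3⟩ := hc
    exact x2 (b n x1 x3)
  refine ⟨?_, ?_, ?_, fun _ => ⟨fun h hh => fJ h hh, fun h hh => fR h hh⟩⟩
  · rintro ⟨-, hRS, -, -⟩
    have hSeq : S = cl I S := by
      apply Set.Subset.antisymm (subset_cl I S)
      intro h hh
      by_contra hns
      exact hns (hRS (fR h ⟨hh, hns⟩).1)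
    refine ⟨hSeq, ?_⟩
    apply Set.Subset.antisymm
    · rw [← hSeq]
      exact subset_cl (opRel I g m) S
    · intro h hh
      by_cases hcc : h ∈ cl I S
      · exact hcc
      · exact subset_cl I S (hRS (fJ h ⟨hh, hcc⟩).1)
  · rintro ⟨-, hInt⟩
    refine ⟨subset_cl I S, ?_⟩
    intro h hcl
    have hcl' : ∀ n ∈ intentOf I S, I h n := hcl
    show ∀ n ∈ intentOf (opRel I g m) S, opRel I g m h n
    rw [hInt]
    intro n hn
    exact Or.inl (hcl' n hn)
  · intro hc
    have hgnS : g ∉ S := by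
      intro hgS
      rcases hc with hc | ⟨-, hne, heq⟩
      · exact hc (mixgen_J_of_mem hg hK hgS)
      · rw [Set.union_eq_self_of_subset_right (Set.singleton_subset_iff.2 hgS)] at heq
        exact hne heq
    exact ⟨fun x hx => ⟨subset_cl I S hx, fun e => hgnS (e ▸ hx)⟩, partbc hg hgnS⟩
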